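/- For the metric dl² = dr² + c²r²/(c² − ω²r²) dφ² + dz², the scalar curvature equals −6c²ω²/(c² − ω²r²)², and in particular is strictly negative for all 0 < r < c/ω. -/

import Mathlib

/-- g_φφ component of the spatial metric. -/
noncomputable def gphiphi (c ω : ℝ) : ℝ → ℝ := fun r => c^2 * r^2 / (c^2 - ω^2 * r^2)

/-- Christoffel symbol Γ^r_{φφ} = −½ g^{rr} ∂_r g_φφ (with g^{rr} = 1). -/
noncomputable def GammaRphiphi (c ω : ℝ) : ℝ → ℝ := fun r => -(1/2) * deriv (gphiphi c ω) r

/-- Christoffel symbol Γ^φ_{rφ} = ½ g^{φφ} ∂_r g_φφ. -/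
noncomputable def GammaPhiRphi (c ω : ℝ) : ℝ → ℝ :=
  fun r => deriv (gphiphi c ω) r / (2 * gphiphi c ω r)

/-- The only nonvanishing Riemann component R_{rφrφ}. -/
noncomputable def RiemRphiRphi (c ω : ℝ) : ℝ → ℝ :=
  fun r => deriv (GammaRphiphi c ω) r - GammaRphiphi c ω r * GammaPhiRphi c ω r

/-!
Away from `r = 0` and `D = c² − ω²r² = 0` every quantity involved is a rational function
of `r`: `∂_r g_φφ = 2c⁴r/D²`, `Γ^r_φφ = −c⁴r/D²`, `Γ^φ_rφ = c²/(rD)`, hence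
`R_rφrφ = −3c⁴ω²r²/D³` and `R = 2 g^φφ R_rφrφ = −6c²ω²/D²`. On `0 < r < c/ω` one has `D > 0`,
so `R < 0`.
-/

section

variable {c ω x : ℝ}

lemma hasDerivAt_sq_sub_mul_sq :
    HasDerivAt (fun y : ℝ => c^2 - ω^2 * y^2) (-(ω^2 * (2 * x))) x := by
  simpa using ((hasDerivAt_pow 2 x).const_mul (ω^2)).const_sub (c^2)

lemma hasDerivAt_gphiphi (hx : c^2 - ω^2 * x^2 ≠ 0) :
    HasDerivAt (gphiphi c ω) (2 * c^4 * x / (c^2 - ω^2 * x^2)^2) x := by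
  have hnum : HasDerivAt (fun y : ℝ => c^2 * y^2) (c^2 * (2 * x)) x := by
    simpa using (hasDerivAt_pow 2 x).const_mul (c^2)
  refine (hnum.div hasDerivAt_sq_sub_mul_sq hx).congr_deriv ?_
  field_simp
  ring

lemma GammaRphiphi_eq (hx : c^2 - ω^2 * x^2 ≠ 0) :
    GammaRphiphi c ω x = -(c^4 * x / (c^2 - ω^2 * x^2)^2) := by
  rw [GammaRphiphi, (hasDerivAt_gphiphi hx).deriv]
  ring

lemma GammaRphiphi_eventuallyEq (hx : c^2 - ω^2 * x^2 ≠ 0) :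
    GammaRphiphi c ω =ᶠ[nhds x] fun y => -(c^4 * y / (c^2 - ω^2 * y^2)^2) := by
  have hopen : IsOpen {y : ℝ | c^2 - ω^2 * y^2 ≠ 0} :=
    isOpen_ne_fun (by fun_prop) continuous_const
  filter_upwards [hopen.mem_nhds hx] with y hy
  exact GammaRphiphi_eq hy

lemma hasDerivAt_GammaRphiphi (hx : c^2 - ω^2 * x^2 ≠ 0) :
    HasDerivAt (GammaRphiphi c ω)
      (-(c^4 * (c^2 + 3 * ω^2 * x^2) / (c^2 - ω^2 * x^2)^3)) x := by
  have hnum : HasDerivAt (fun y : ℝ => c^4 * y) (c^4) x := by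
    simpa using (hasDerivAt_id x).const_mul (c^4)
  have hden : HasDerivAt (fun y : ℝ => (c^2 - ω^2 * y^2)^2)
      (2 * (c^2 - ω^2 * x^2) * -(ω^2 * (2 * x))) x :=
    (hasDerivAt_sq_sub_mul_sq.pow 2).congr_deriv (by ring)
  refine ((hnum.div hden (pow_ne_zero 2 hx)).neg.congr_deriv ?_).congr_of_eventuallyEq
    (GammaRphiphi_eventuallyEq hx)
  field_simp
  ring

lemma GammaPhiRphi_eq (hc : c ≠ 0) (hx₀ : x ≠ 0) (hx : c^2 - ω^2 * x^2 ≠ 0) :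
    GammaPhiRphi c ω x = c^2 / (x * (c^2 - ω^2 * x^2)) := by
  rw [GammaPhiRphi, (hasDerivAt_gphiphi hx).deriv, gphiphi]
  field_simp

lemma RiemRphiRphi_eq (hc : c ≠ 0) (hx₀ : x ≠ 0) (hx : c^2 - ω^2 * x^2 ≠ 0) :
    RiemRphiRphi c ω x = -(3 * c^4 * ω^2 * x^2) / (c^2 - ω^2 * x^2)^3 := by
  rw [RiemRphiRphi, (hasDerivAt_GammaRphiphi hx).deriv, GammaRphiphi_eq hx,
    GammaPhiRphi_eq hc hx₀ hx]
  field_simp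
  ring

lemma scalarCurvature_eq (hc : c ≠ 0) (hx₀ : x ≠ 0) (hx : c^2 - ω^2 * x^2 ≠ 0) :
    2 * (gphiphi c ω x)⁻¹ * RiemRphiRphi c ω x = -(6 * c^2 * ω^2) / (c^2 - ω^2 * x^2)^2 := by
  rw [RiemRphiRphi_eq hc hx₀ hx, gphiphi]
  field_simp
  ring

end

/-- The scalar curvature R = g^{ki}g^{lj}R_{klij} = 2 g^{rr} g^{φφ} R_{rφrφ}
(all other terms vanish) equals −6c²ω²/(c² − ω²r²)², which is strictly negative
for 0 < r < c/ω. -/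
theorem scalar_curvature (c ω r : ℝ) (hc : 0 < c) (hω : 0 < ω)
    (hr : 0 < r) (hr' : r < c / ω) :
    2 * (gphiphi c ω r)⁻¹ * RiemRphiRphi c ω r
        = -(6 * c^2 * ω^2) / (c^2 - ω^2 * r^2)^2 ∧
      2 * (gphiphi c ω r)⁻¹ * RiemRphiRphi c ω r < 0 := by
  have hωr : ω * r < c := by rwa [lt_div_iff₀ hω, mul_comm] at hr'
  have hD : 0 < c^2 - ω^2 * r^2 := by nlinarith [mul_pos hω hr]
  have hR := scalarCurvature_eq hc.ne' hr.ne' hD.ne'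
  refine ⟨hR, hR ▸ div_neg_of_neg_of_pos ?_ (by positivity)⟩
  exact neg_neg_of_pos (by positivity)
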